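/- Let E ∈ C³(ℝ²) with ∇E(0) = (cos α, sin α), E_ijk = ∇³E(0)[e_i, e_j, e_k], and A = [[(E111 − E122)/2, (E112 − E222)/2], [E112, E122]]. Then: (i) the leading-order GAD system ẋ = −(I − 2 v ⊗ v) ∇E(0), ε² v̇ = −(I − v ⊗ v) ∇³E(0)[x, v], for v = (cos φ, sin φ) on the unit circle, is equivalent (under v ↦ v̄ = (cos 2φ, sin 2φ)) to ẋ = R_{−α} v̄, ε² d/dt v̄ = −2 ⟨R_{π/2} v̄, A x⟩ R_{π/2} v̄; and (ii) for A x ≠ 0, the leading-order ISD ẋ = −(I − 2 w1(x) ⊗ w1(x)) ∇E(0), where w1(x) is a unit eigenvector for the smallest eigenvalue of ∇³E(0)[x], equals ẋ = −R_{−α} A x / ‖A x‖. -/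

import Mathlib

open Real Filter Set
open scoped Topology RealInnerProductSpace

noncomputable section
abbrev Vec (N : ℕ) := EuclideanSpace ℝ (Fin N)

noncomputable def hessCLM {N : ℕ} (E : Vec N → ℝ) (x : Vec N) : Vec N →L[ℝ] Vec N :=
  fderiv ℝ (gradient E) x

noncomputable def hessOp {N : ℕ} (E : Vec N → ℝ) (x : Vec N) : Module.End ℝ (Vec N) :=
  (hessCLM E x).toLinearMap

def IsMinEigen {N : ℕ} (T : Module.End ℝ (Vec N)) (lam : ℝ) : Prop :=
  T.HasEigenvalue lam ∧ ∀ μ : ℝ, T.HasEigenvalue μ → lam ≤ μ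

def IsMinEigvec {N : ℕ} (T : Module.End ℝ (Vec N)) (w : Vec N) : Prop :=
  ‖w‖ = 1 ∧ ∃ lam : ℝ, IsMinEigen T lam ∧ T w = lam • w

def TwoSmallestEigen {N : ℕ} (T : Module.End ℝ (Vec N)) (lam1 lam2 : ℝ) : Prop :=
  T.HasEigenvalue lam1 ∧ T.HasEigenvalue lam2 ∧ lam1 ≤ lam2 ∧
    (∀ μ : ℝ, T.HasEigenvalue μ → lam1 ≤ μ) ∧
    (∀ μ : ℝ, T.HasEigenvalue μ → μ = lam1 ∨ lam2 ≤ μ) ∧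
    (lam1 < lam2 → Module.finrank ℝ (T.eigenspace lam1) = 1)

/-- the reflection `(I - 2 w ⊗ w) u`. -/
def reflect {N : ℕ} (w u : Vec N) : Vec N := u - (2 * ⟪w, u⟫) • w

/-- ISD vector field with eigendirection `w`. -/
noncomputable def isdField {N : ℕ} (E : Vec N → ℝ) (x w : Vec N) : Vec N :=
  -(reflect w (gradient E x))

def IsISDSolOn {N : ℕ} (E : Vec N → ℝ) (x : ℝ → Vec N) (s : Set ℝ) : Prop :=
  ∀ t ∈ s, ∃ w : Vec N, IsMinEigvec (hessOp E (x t)) w ∧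
    HasDerivAt x (isdField E (x t) w) t

noncomputable def gadVField {N : ℕ} (E : Vec N → ℝ) (x v : Vec N) : Vec N :=
  -(hessCLM E x v) + ⟪v, hessCLM E x v⟫ • v

def IsGADSolOn {N : ℕ} (E : Vec N → ℝ) (ε : ℝ) (x v : ℝ → Vec N) (s : Set ℝ) : Prop :=
  ∀ t ∈ s, ‖v t‖ = 1 ∧ HasDerivAt x (-(reflect (v t) (gradient E (x t)))) t ∧
    HasDerivAt v ((ε ^ 2)⁻¹ • gadVField E (x t) (v t)) t

def IsIndexOneSaddle {N : ℕ} (E : Vec N → ℝ) (x : Vec N) : Prop :=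
  gradient E x = 0 ∧ ∃ lam1 lam2 : ℝ,
    TwoSmallestEigen (hessOp E x) lam1 lam2 ∧ lam1 < 0 ∧ 0 < lam2

end

noncomputable section

def mkVec (a b : ℝ) : Vec 2 := (WithLp.equiv 2 (Fin 2 → ℝ)).symm ![a, b]

/-- canonical basis vectors of `ℝ²`. -/
def e2 (i : Fin 2) : Vec 2 := EuclideanSpace.single i 1

/-- third partial derivatives `E_ijk = ∇³E(0)[e_i, e_j, e_k]`. -/
def D3 (E : Vec 2 → ℝ) (i j k : Fin 2) : ℝ :=
  iteratedFDeriv ℝ 3 E 0 ![e2 i, e2 j, e2 k]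

/-- the contracted matrix `∇³E(0)[x]`, as an endomorphism of `ℝ²`. -/
def T3L (E : Vec 2 → ℝ) (x : Vec 2) : Module.End ℝ (Vec 2) :=
  Matrix.toEuclideanLin (Matrix.of fun i j => ∑ k : Fin 2, D3 E i j k * x k)

/-- the matrix `A = [[(E111 - E122)/2, (E112 - E222)/2], [E112, E122]]`, as a map `ℝ² → ℝ²`. -/
def AL (E : Vec 2 → ℝ) : Vec 2 →ₗ[ℝ] Vec 2 :=
  Matrix.toEuclideanLin
    !![(D3 E 0 0 0 - D3 E 0 1 1) / 2, (D3 E 0 0 1 - D3 E 1 1 1) / 2;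
       D3 E 0 0 1, D3 E 0 1 1]

/-- rotation of angle `ω`, as a map `ℝ² → ℝ²`. -/
def RotL (ω : ℝ) : Vec 2 →ₗ[ℝ] Vec 2 :=
  Matrix.toEuclideanLin !![Real.cos ω, -Real.sin ω; Real.sin ω, Real.cos ω]

end

/-!
Since `E` is `C³`, `∇³E(0)` is a symmetric trilinear form, so `∇³E(0)[x]` is a symmetric matrix
`[[a, b], [b, c]]` and `A x = ((a - c) / 2, b)`. For a unit vector `w`, the reflection
`I - 2 w ⊗ w` sends `(cos α, sin α)` to `-R_{-α} w̄`, which gives the `x`-equations. In (i) the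
GAD force at `v = (cos φ, sin φ)` is `(a - c) / 2 sin 2φ - b cos 2φ` times the unit tangent
`(-sin φ, cos φ)`, and the right-hand side for `v̄` is twice that factor times the tangent at `2φ`,
so both systems say `ε² φ̇ = (a - c) / 2 sin 2φ - b cos 2φ`. In (ii) the smallest eigenvalue of
`[[a, b], [b, c]]` is `(a + c) / 2 - ‖A x‖`, and its unit eigenvectors satisfy
`w̄ = -A x / ‖A x‖`.
-/

section ThirdDerivative

variable {E F : Type*} [NormedAddCommGroup E] [NormedSpace ℝ E]
  [NormedAddCommGroup F] [NormedSpace ℝ F] {f : E → F}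

theorem ContDiff.iteratedFDeriv_three_swap_right (hf : ContDiff ℝ 3 f) (x u v w : E) :
    iteratedFDeriv ℝ 3 f x ![u, v, w] = iteratedFDeriv ℝ 3 f x ![u, w, v] := by
  have hd : DifferentiableAt ℝ (iteratedFDeriv ℝ 2 f) x :=
    (hf.differentiable_iteratedFDeriv (by norm_num)).differentiableAt
  have hsymm : (fun y => iteratedFDeriv ℝ 2 f y ![v, w])
      = fun y => iteratedFDeriv ℝ 2 f y ![w, v] := funext fun y => by
    simp only [iteratedFDeriv_two_apply]
    exact hf.contDiffAt.isSymmSndFDerivAt (by norm_num [minSmoothness_of_isRCLikeNormedField]) v w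
  simp only [iteratedFDeriv_succ_apply_left (n := 2)]
  rw [← fderiv_continuousMultilinear_apply_const_apply hd,
    ← fderiv_continuousMultilinear_apply_const_apply hd]
  exact congrArg (fderiv ℝ · x u) hsymm

theorem ContDiff.iteratedFDeriv_three_swap_left (hf : ContDiff ℝ 3 f) (x u v w : E) :
    iteratedFDeriv ℝ 3 f x ![u, v, w] = iteratedFDeriv ℝ 3 f x ![v, u, w] := by
  have hf' : ContDiff ℝ 2 (fderiv ℝ f) := hf.fderiv_right (by norm_num)
  simp only [iteratedFDeriv_succ_apply_right (n := 2), iteratedFDeriv_two_apply]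
  exact congrArg (· w) (hf'.contDiffAt.isSymmSndFDerivAt
    (by norm_num [minSmoothness_of_isRCLikeNormedField]) u v)

end ThirdDerivative

@[simp] lemma mkVec_apply_zero (a b : ℝ) : mkVec a b 0 = a := rfl

@[simp] lemma mkVec_apply_one (a b : ℝ) : mkVec a b 1 = b := rfl

lemma mkVec_eta (u : Vec 2) : mkVec (u 0) (u 1) = u := by
  ext i; fin_cases i <;> rfl

lemma mkVec_inj {a b c d : ℝ} : mkVec a b = mkVec c d ↔ a = c ∧ b = d := by
  refine ⟨fun h => ⟨congrArg (· 0) h, congrArg (· 1) h⟩, ?_⟩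
  rintro ⟨rfl, rfl⟩; rfl

@[simp] lemma neg_mkVec (a b : ℝ) : -mkVec a b = mkVec (-a) (-b) := by
  ext i; fin_cases i <;> rfl

@[simp] lemma mkVec_add_mkVec (a b c d : ℝ) : mkVec a b + mkVec c d = mkVec (a + c) (b + d) := by
  ext i; fin_cases i <;> rfl

@[simp] lemma smul_mkVec (k a b : ℝ) : k • mkVec a b = mkVec (k * a) (k * b) := by
  ext i; fin_cases i <;> rfl

@[simp] lemma inner_mkVec (a b c d : ℝ) : ⟪mkVec a b, mkVec c d⟫ = a * c + b * d := by
  simp [mkVec, PiLp.inner_apply, Fin.sum_univ_two, mul_comm]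

lemma norm_mkVec_sq (a b : ℝ) : ‖mkVec a b‖ ^ 2 = a ^ 2 + b ^ 2 := by
  rw [← real_inner_self_eq_norm_sq, inner_mkVec]; ring

lemma sq_add_sq_eq_one_of_norm_eq_one {w : Vec 2} (hw : ‖w‖ = 1) : w 0 ^ 2 + w 1 ^ 2 = 1 := by
  rw [← norm_mkVec_sq, mkVec_eta, hw, one_pow]

lemma toEuclideanLin_mkVec (p q r s u v : ℝ) :
    Matrix.toEuclideanLin !![p, q; r, s] (mkVec u v) = mkVec (p * u + q * v) (r * u + s * v) := by
  ext i; fin_cases i <;> simp [mkVec, mul_comm]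

lemma RotL_mkVec (ω a b : ℝ) :
    RotL ω (mkVec a b) = mkVec (cos ω * a - sin ω * b) (sin ω * a + cos ω * b) := by
  rw [RotL, toEuclideanLin_mkVec, neg_mul, ← sub_eq_add_neg]

section ThirdDerivative2D

variable {E : Vec 2 → ℝ}

lemma D3_swap_left (hE : ContDiff ℝ 3 E) (i j k : Fin 2) : D3 E i j k = D3 E j i k :=
  hE.iteratedFDeriv_three_swap_left 0 _ _ _

lemma D3_swap_right (hE : ContDiff ℝ 3 E) (i j k : Fin 2) : D3 E i j k = D3 E i k j :=
  hE.iteratedFDeriv_three_swap_right 0 _ _ _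

lemma exists_T3L_eq_and_AL_eq (hE : ContDiff ℝ 3 E) (x : Vec 2) :
    ∃ a b c : ℝ, T3L E x = Matrix.toEuclideanLin !![a, b; b, c] ∧
      AL E x = mkVec ((a - c) / 2) b := by
  have h010 : D3 E 0 1 0 = D3 E 0 0 1 := D3_swap_right hE 0 1 0
  have h100 : D3 E 1 0 0 = D3 E 0 0 1 := (D3_swap_left hE 1 0 0).trans h010
  have h101 : D3 E 1 0 1 = D3 E 0 1 1 := D3_swap_left hE 1 0 1
  have h110 : D3 E 1 1 0 = D3 E 0 1 1 := (D3_swap_right hE 1 1 0).trans h101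
  refine ⟨D3 E 0 0 0 * x 0 + D3 E 0 0 1 * x 1, D3 E 0 0 1 * x 0 + D3 E 0 1 1 * x 1,
    D3 E 0 1 1 * x 0 + D3 E 1 1 1 * x 1, ?_, ?_⟩
  · rw [T3L]
    congr 1
    ext i j
    fin_cases i <;> fin_cases j <;> simp [Fin.sum_univ_two, h010, h100, h101, h110]
  · rw [AL, ← mkVec_eta x, toEuclideanLin_mkVec, mkVec_inj]
    simp only [mkVec_apply_zero, mkVec_apply_one, and_true]
    ring

end ThirdDerivative2D

/-- The paper's `v ↦ v̄`, extended polynomially off the unit circle. -/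
def doubleAngle (w : Vec 2) : Vec 2 := mkVec (w 0 ^ 2 - w 1 ^ 2) (2 * w 0 * w 1)

lemma doubleAngle_mkVec_cos_sin (φ : ℝ) :
    doubleAngle (mkVec (cos φ) (sin φ)) = mkVec (cos (2 * φ)) (sin (2 * φ)) := by
  rw [doubleAngle, mkVec_apply_zero, mkVec_apply_one, cos_two_mul', sin_two_mul,
    mul_right_comm]

lemma norm_mkVec_cos_sin (φ : ℝ) : ‖mkVec (cos φ) (sin φ)‖ = 1 := by
  rw [← pow_left_inj₀ (norm_nonneg _) zero_le_one two_ne_zero, norm_mkVec_sq, cos_sq_add_sin_sq,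
    one_pow]

lemma neg_reflect {N : ℕ} (w u : Vec N) : -reflect w u = -u + (2 * ⟪w, u⟫) • w := by
  rw [reflect, neg_sub, sub_eq_neg_add]

lemma reflect_mkVec_cos_sin {w : Vec 2} (hw : ‖w‖ = 1) (α : ℝ) :
    reflect w (mkVec (cos α) (sin α)) = -RotL (-α) (doubleAngle w) := by
  have hw2 := sq_add_sq_eq_one_of_norm_eq_one hw
  rw [reflect, doubleAngle, RotL_mkVec, ← mkVec_eta w]
  simp only [mkVec_apply_zero, mkVec_apply_one, inner_mkVec, smul_mkVec, neg_mkVec,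
    sub_eq_add_neg, mkVec_add_mkVec, mkVec_inj, cos_neg, sin_neg]
  constructor
  · linear_combination -cos α * hw2
  · linear_combination -sin α * hw2

lemma RotL_pi_div_two_mkVec (a b : ℝ) : RotL (π / 2) (mkVec a b) = mkVec (-b) a := by
  simp [RotL_mkVec]

lemma neg_add_inner_smul_symm_cos_sin (a b c φ : ℝ) :
    -(Matrix.toEuclideanLin !![a, b; b, c] (mkVec (cos φ) (sin φ)))
      + ⟪mkVec (cos φ) (sin φ), Matrix.toEuclideanLin !![a, b; b, c] (mkVec (cos φ) (sin φ))⟫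
        • mkVec (cos φ) (sin φ)
      = ((a - c) / 2 * sin (2 * φ) - b * cos (2 * φ)) • mkVec (-sin φ) (cos φ) := by
  have h := sin_sq_add_cos_sq φ
  simp only [toEuclideanLin_mkVec, inner_mkVec, smul_mkVec, neg_mkVec, mkVec_add_mkVec,
    mkVec_inj, cos_two_mul', sin_two_mul]
  constructor
  · linear_combination (a * cos φ + b * sin φ) * h
  · linear_combination (b * cos φ + c * sin φ) * h

lemma neg_two_inner_RotL_pi_div_two_smul (p b θ : ℝ) :
    (-2 * ⟪RotL (π / 2) (mkVec (cos θ) (sin θ)), mkVec p b⟫) • RotL (π / 2) (mkVec (cos θ) (sin θ))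
      = (2 * (p * sin θ - b * cos θ)) • mkVec (-sin θ) (cos θ) := by
  rw [RotL_pi_div_two_mkVec, inner_mkVec]
  congr 1; ring

lemma hasDerivAt_mkVec_iff {f g : ℝ → ℝ} {f' g' t : ℝ} :
    HasDerivAt (fun s => mkVec (f s) (g s)) (mkVec f' g') t ↔
      HasDerivAt f f' t ∧ HasDerivAt g g' t := by
  refine ⟨fun h => ⟨?_, ?_⟩, fun ⟨hf, hg⟩ => ?_⟩
  · exact (EuclideanSpace.proj (0 : Fin 2) : Vec 2 →L[ℝ] ℝ).hasFDerivAt.comp_hasDerivAt t h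
  · exact (EuclideanSpace.proj (1 : Fin 2) : Vec 2 →L[ℝ] ℝ).hasFDerivAt.comp_hasDerivAt t h
  have hpi : HasDerivAt (fun s => ![f s, g s]) ![f', g'] t :=
    hasDerivAt_pi.2 fun i => by fin_cases i <;> assumption
  exact (PiLp.continuousLinearEquiv 2 ℝ (fun _ : Fin 2 => ℝ)).symm.hasFDerivAt.comp_hasDerivAt t hpi

/-- Near `t`, `θ s - θ t = arcsin (sin θ s * cos θ t - cos θ s * sin θ t)` by continuity. -/
lemma hasDerivAt_of_hasDerivAt_cos_sin {θ : ℝ → ℝ} {t k : ℝ} (hθ : ContinuousAt θ t)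
    (hcos : HasDerivAt (fun s => cos (θ s)) (k * -sin (θ t)) t)
    (hsin : HasDerivAt (fun s => sin (θ s)) (k * cos (θ t)) t) :
    HasDerivAt θ k t := by
  set c := θ t with hc
  have hdiff : HasDerivAt (fun s => sin (θ s) * cos c - cos (θ s) * sin c) k t :=
    ((hsin.mul_const (cos c)).sub (hcos.mul_const (sin c))).congr_deriv
      (by linear_combination k * sin_sq_add_cos_sq c)
  have harcsin : HasDerivAt arcsin 1 (sin (θ t) * cos c - cos (θ t) * sin c) := by
    rw [← hc, ← sin_sub, sub_self]
    simpa using hasDerivAt_arcsin (by norm_num : (0 : ℝ) ≠ -1) (by norm_num : (0 : ℝ) ≠ 1)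
  have hnear : ∀ᶠ s in 𝓝 t, θ s ∈ Icc (c - π / 2) (c + π / 2) :=
    hθ.preimage_mem_nhds (Icc_mem_nhds (by linarith [pi_pos]) (by linarith [pi_pos]))
  have hlocal : (fun s => c + arcsin (sin (θ s) * cos c - cos (θ s) * sin c)) =ᶠ[𝓝 t] θ := by
    filter_upwards [hnear] with s ⟨hlo, hhi⟩
    rw [← sin_sub, arcsin_sin (by linarith) (by linarith)]
    ring
  simpa using ((harcsin.comp t hdiff).const_add c).congr_of_eventuallyEq hlocal.symm

lemma hasDerivAt_mkVec_cos_sin_iff {θ : ℝ → ℝ} {t : ℝ} (hθ : ContinuousAt θ t) (k : ℝ) :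
    HasDerivAt (fun s => mkVec (cos (θ s)) (sin (θ s))) (k • mkVec (-sin (θ t)) (cos (θ t))) t ↔
      HasDerivAt θ k t := by
  rw [smul_mkVec, hasDerivAt_mkVec_iff]
  refine ⟨fun ⟨hcos, hsin⟩ => hasDerivAt_of_hasDerivAt_cos_sin hθ hcos hsin, fun h => ⟨?_, ?_⟩⟩
  · exact h.cos.congr_deriv (mul_comm _ _)
  · exact h.sin.congr_deriv (mul_comm _ _)

lemma hasDerivAt_const_mul_iff {f : ℝ → ℝ} {c k t : ℝ} (hc : c ≠ 0) :
    HasDerivAt (fun s => c * f s) (c * k) t ↔ HasDerivAt f k t := by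
  refine ⟨fun h => ?_, fun h => h.const_mul c⟩
  simpa [← mul_assoc, inv_mul_cancel₀ hc] using h.const_mul c⁻¹

lemma hasEigenvalue_symm_sub_norm (a b c : ℝ) :
    Module.End.HasEigenvalue (Matrix.toEuclideanLin !![a, b; b, c])
      ((a + c) / 2 - ‖mkVec ((a - c) / 2) b‖) := by
  set r := ‖mkVec ((a - c) / 2) b‖
  have hr : r ^ 2 = ((a - c) / 2) ^ 2 + b ^ 2 := norm_mkVec_sq _ _
  by_cases hdeg : b = 0 ∧ (a - c) / 2 = r
  · refine Module.End.hasEigenvalue_of_hasEigenvector (x := mkVec 0 1)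
      ⟨Module.End.mem_eigenspace_iff.2 ?_, fun h => one_ne_zero (congrArg (· 1) h : (1 : ℝ) = 0)⟩
    obtain ⟨rfl, hp⟩ := hdeg
    rw [toEuclideanLin_mkVec, smul_mkVec, mkVec_inj]
    exact ⟨by ring, by linear_combination -hp⟩
  · refine Module.End.hasEigenvalue_of_hasEigenvector (x := mkVec ((a - c) / 2 - r) b)
      ⟨Module.End.mem_eigenspace_iff.2 ?_, fun h => hdeg ?_⟩
    · rw [toEuclideanLin_mkVec, smul_mkVec, mkVec_inj]
      constructor
      · linear_combination -hr
      · ring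
    · have h0 : (a - c) / 2 - r = 0 := congrArg (· 0) h
      exact ⟨congrArg (· 1) h, by linarith⟩

lemma symm_apply_eq_of_isMinEigvec {a b c : ℝ} {w : Vec 2}
    (hr : 0 < ‖mkVec ((a - c) / 2) b‖)
    (hw : IsMinEigvec (Matrix.toEuclideanLin !![a, b; b, c]) w) :
    Matrix.toEuclideanLin !![a, b; b, c] w = ((a + c) / 2 - ‖mkVec ((a - c) / 2) b‖) • w := by
  obtain ⟨hw1, lam, ⟨-, hmin⟩, hTw⟩ := hw
  set r := ‖mkVec ((a - c) / 2) b‖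
  suffices lam = (a + c) / 2 - r by rw [hTw, this]
  have hle : lam ≤ (a + c) / 2 - r := hmin _ (hasEigenvalue_symm_sub_norm a b c)
  have hr2 : r ^ 2 = ((a - c) / 2) ^ 2 + b ^ 2 := norm_mkVec_sq _ _
  have hw2 := sq_add_sq_eq_one_of_norm_eq_one hw1
  rw [← mkVec_eta w, toEuclideanLin_mkVec, smul_mkVec, mkVec_inj] at hTw
  obtain ⟨h0, h1⟩ := hTw
  have hroot : (lam - ((a + c) / 2 - r)) * (lam - ((a + c) / 2 + r)) = 0 := by
    linear_combination (w 0 * (c - lam) - w 1 * b) * h0 + (w 1 * (a - lam) - w 0 * b) * h1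
      - ((a - lam) * (c - lam) - b ^ 2) * hw2 - hr2
  rcases mul_eq_zero.1 hroot with h | h <;> linarith

lemma doubleAngle_eq_of_isMinEigvec {a b c : ℝ} {w : Vec 2} (hA : mkVec ((a - c) / 2) b ≠ 0)
    (hw : IsMinEigvec (Matrix.toEuclideanLin !![a, b; b, c]) w) :
    doubleAngle w = -(‖mkVec ((a - c) / 2) b‖⁻¹ • mkVec ((a - c) / 2) b) := by
  have hr : 0 < ‖mkVec ((a - c) / 2) b‖ := norm_pos_iff.2 hA
  have hTw := symm_apply_eq_of_isMinEigvec hr hw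
  have hw2 := sq_add_sq_eq_one_of_norm_eq_one hw.1
  set r := ‖mkVec ((a - c) / 2) b‖
  rw [← mkVec_eta w, toEuclideanLin_mkVec, smul_mkVec, mkVec_inj] at hTw
  obtain ⟨h0, h1⟩ := hTw
  have hcos : r * (w 0 ^ 2 - w 1 ^ 2) = -((a - c) / 2) := by
    linear_combination w 0 * h0 - w 1 * h1 - (a - c) / 2 * hw2
  have hsin : r * (2 * w 0 * w 1) = -b := by
    linear_combination w 1 * h0 + w 0 * h1 - b * hw2
  rw [doubleAngle, smul_mkVec, neg_mkVec, mkVec_inj]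
  constructor <;> field_simp
  · linear_combination 2 * hcos
  · linear_combination hsin

theorem stmt13_general (E : Vec 2 → ℝ) (hE : ContDiff ℝ 3 E) (α : ℝ)
    (hg0 : gradient E 0 = mkVec (Real.cos α) (Real.sin α)) (ε : ℝ) :
    (∀ (x : ℝ → Vec 2) (φ : ℝ → ℝ), Continuous φ →
      ∀ (v vbar : ℝ → Vec 2),
        v = (fun t => mkVec (Real.cos (φ t)) (Real.sin (φ t))) →
        vbar = (fun t => mkVec (Real.cos (2 * φ t)) (Real.sin (2 * φ t))) →
        ∀ t : ℝ,
        ((HasDerivAt x (-(gradient E 0) + (2 * ⟪v t, gradient E 0⟫) • v t) t ∧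
          HasDerivAt v ((ε ^ 2)⁻¹ •
            (-(T3L E (x t) (v t)) + ⟪v t, T3L E (x t) (v t)⟫ • v t)) t)
        ↔
        (HasDerivAt x (RotL (-α) (vbar t)) t ∧
          HasDerivAt vbar ((ε ^ 2)⁻¹ •
            ((-2 * ⟪RotL (Real.pi / 2) (vbar t), AL E (x t)⟫) •
              RotL (Real.pi / 2) (vbar t))) t))) ∧
    (∀ x : Vec 2, AL E x ≠ 0 → ∀ w : Vec 2, IsMinEigvec (T3L E x) w →
      -(gradient E 0) + (2 * ⟪w, gradient E 0⟫) • w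
        = -(‖AL E x‖⁻¹ • RotL (-α) (AL E x))) := by
  refine ⟨fun x φ hφ v vbar hv hvbar t => ?_, fun x hAx w hw => ?_⟩
  · obtain ⟨a, b, c, hT, hA⟩ := exists_T3L_eq_and_AL_eq hE (x t)
    subst hv hvbar
    beta_reduce
    rw [← neg_reflect, hg0, reflect_mkVec_cos_sin (norm_mkVec_cos_sin _), neg_neg,
      doubleAngle_mkVec_cos_sin]
    refine and_congr_right' ?_
    rw [hT, hA, neg_add_inner_smul_symm_cos_sin, neg_two_inner_RotL_pi_div_two_smul, smul_smul,
      smul_smul, hasDerivAt_mkVec_cos_sin_iff hφ.continuousAt,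
      hasDerivAt_mkVec_cos_sin_iff (θ := fun s => 2 * φ s) (hφ.const_mul 2).continuousAt,
      mul_left_comm, hasDerivAt_const_mul_iff two_ne_zero]
  · obtain ⟨a, b, c, hT, hA⟩ := exists_T3L_eq_and_AL_eq hE x
    rw [hT] at hw
    rw [hA] at hAx ⊢
    rw [← neg_reflect, hg0, reflect_mkVec_cos_sin hw.1, neg_neg,
      doubleAngle_eq_of_isMinEigvec hAx hw, map_neg, map_smul]

/-- Lemma `lemma_Ax`. Suppose `∇E(0) = (cos α, sin α)`.
(i) The leading-order GAD `ẋ = -(I - 2v⊗v)∇E(0)`, `ε²v̇ = -(I - v⊗v)∇³E(0)[x,v]`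
for `v = (cos φ, sin φ)` is equivalent, under `v ↦ v̄ = (cos 2φ, sin 2φ)`, to
`ẋ = R₋α v̄`, `ε² v̄̇ = -2⟨R_{π/2} v̄, Ax⟩ R_{π/2} v̄`.
(ii) For `Ax ≠ 0`, the leading-order ISD `ẋ = -(I - 2w₁(x)⊗w₁(x))∇E(0)`, with `w₁(x)` a
unit first eigenvector of `∇³E(0)[x]`, equals `ẋ = -R₋α A x / ‖Ax‖`. -/
theorem stmt13 (E : Vec 2 → ℝ) (hE : ContDiff ℝ 3 E) (α : ℝ)
    (hg0 : gradient E 0 = mkVec (Real.cos α) (Real.sin α)) (ε : ℝ) (hε : 0 < ε) :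
    (∀ (x : ℝ → Vec 2) (φ : ℝ → ℝ), Continuous φ →
      ∀ (v vbar : ℝ → Vec 2),
        v = (fun t => mkVec (Real.cos (φ t)) (Real.sin (φ t))) →
        vbar = (fun t => mkVec (Real.cos (2 * φ t)) (Real.sin (2 * φ t))) →
        ∀ t : ℝ,
        ((HasDerivAt x (-(gradient E 0) + (2 * ⟪v t, gradient E 0⟫) • v t) t ∧
          HasDerivAt v ((ε ^ 2)⁻¹ •
            (-(T3L E (x t) (v t)) + ⟪v t, T3L E (x t) (v t)⟫ • v t)) t)
        ↔
        (HasDerivAt x (RotL (-α) (vbar t)) t ∧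
          HasDerivAt vbar ((ε ^ 2)⁻¹ •
            ((-2 * ⟪RotL (Real.pi / 2) (vbar t), AL E (x t)⟫) •
              RotL (Real.pi / 2) (vbar t))) t))) ∧
    (∀ x : Vec 2, AL E x ≠ 0 → ∀ w : Vec 2, IsMinEigvec (T3L E x) w →
      -(gradient E 0) + (2 * ⟪w, gradient E 0⟫) • w
        = -(‖AL E x‖⁻¹ • RotL (-α) (AL E x))) :=
  stmt13_general E hE α hg0 ε
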